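/- Let μ : [0,1] → ℝ be continuous and nonnegative with μ(0) > 0 and μ(1) > 0, let θ ∈ (π/2, π) and τ > 0, and define χ(z) = (1 − e^{−zτ})/τ. Let Γ_τ denote the set of z ∈ ℂ with z ≠ 0, |arg z| ≤ θ, and either |z|·τ ≤ 1, or |arg z| = θ and |z|·τ·sin θ ≤ π. Then there exists a constant c > 0, depending only on θ and μ but not on τ, such that for all z ∈ Γ_τ: |χ(z)·w(χ(z)) − z·w(z)| ≤ c·τ·|z|²·w(|z|), where w(|z|) = ∫₀¹ |z|^(α−1) μ(α) dα. -/

import Mathlib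

open Real MeasureTheory

/-- `w μ z = ∫₀¹ z^(α-1) μ(α) dα`, using the principal branch complex power. -/
noncomputable def w (μ : ℝ → ℝ) (z : ℂ) : ℂ :=
  ∫ α in (0:ℝ)..1, z ^ ((α : ℂ) - 1) * (μ α : ℂ)

/-!
With `χ = chi τ z`, both `χ w(χ)` and `z w(z)` are integrals `∫₀¹ x^α μ(α) dα`, so it suffices
to bound `|χ^α - z^α| ≤ c τ |z| |z|^α` uniformly in `α ∈ [0,1]`. Write `χ = z u` with
`u = (1 - e^{-zτ})/(zτ)`. When `|z| τ` is small, `|u - 1| ≤ |z| τ` and `arg u` is small enough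
that `χ^α = z^α u^α`, whence `|u^α - 1| ≤ 3 |z| τ`. Otherwise `|z| τ` lies between a positive
constant and `max 1 (π / sin θ)`, so `|χ| ≤ K |z|` and the crude bound `|χ^α| + |z^α|` suffices.
Finally `χ ≠ 0` on `Γ_τ`, since `e^{-zτ} = 1` puts `z` on the imaginary axis with `|z| τ ≥ 2π`.
-/

open Complex Set

noncomputable def chi (τ : ℝ) (z : ℂ) : ℂ := (1 - Complex.exp (-z * τ)) / τ

lemma Complex.re_eq_zero_and_two_pi_le_norm_of_exp_eq_one {ζ : ℂ} (h : Complex.exp ζ = 1)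
    (hζ : ζ ≠ 0) : ζ.re = 0 ∧ 2 * π ≤ ‖ζ‖ := by
  obtain ⟨n, rfl⟩ := exp_eq_one_iff.mp h
  have hn : n ≠ 0 := by rintro rfl; simp at hζ
  refine ⟨by simp, ?_⟩
  have hn1 : (1 : ℝ) ≤ |(n : ℝ)| := by exact_mod_cast Int.one_le_abs hn
  have hnorm : ‖(n : ℂ) * (2 * π * I)‖ = |(n : ℝ)| * (2 * π) := by
    simp [abs_of_pos pi_pos]
  rw [hnorm]
  nlinarith [pi_pos]

lemma chi_ne_zero {τ : ℝ} (hτ : 0 < τ) {z : ℂ} (hz : z ≠ 0)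
    (h : ‖z‖ * τ < 2 * π ∨ |z.arg| ≠ π / 2) : chi τ z ≠ 0 := by
  intro hχ
  have hzτ : -z * τ ≠ 0 := mul_ne_zero (neg_ne_zero.2 hz) (ofReal_ne_zero.2 hτ.ne')
  have hexp : Complex.exp (-z * τ) = 1 := by
    rw [chi, div_eq_zero_iff, sub_eq_zero, ofReal_eq_zero] at hχ
    exact hχ.resolve_right hτ.ne' |>.symm
  obtain ⟨hre, hnorm⟩ := re_eq_zero_and_two_pi_le_norm_of_exp_eq_one hexp hzτ
  have hzre : z.re = 0 := by simpa [hτ.ne'] using hre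
  have harg : |z.arg| = π / 2 :=
    (abs_arg_le_pi_div_two_iff.2 hzre.ge).antisymm
      (not_lt.1 fun hlt => (abs_arg_lt_pi_div_two_iff.1 hlt).elim hzre.not_gt hz)
  rw [norm_mul, norm_neg, norm_real, Real.norm_of_nonneg hτ.le] at hnorm
  exact h.elim hnorm.not_gt (· harg)

lemma norm_one_sub_exp_neg_div_sub_one_le {ζ : ℂ} (hζ : ζ ≠ 0) (h : ‖ζ‖ ≤ 1) :
    ‖(1 - Complex.exp (-ζ)) / ζ - 1‖ ≤ ‖ζ‖ := by
  have hexp := norm_exp_sub_one_sub_id_le (x := -ζ) (by rwa [norm_neg])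
  rw [norm_neg] at hexp
  rw [div_sub_one hζ, norm_div, div_le_iff₀ (norm_pos_iff.2 hζ), ← sq]
  calc ‖1 - Complex.exp (-ζ) - ζ‖ = ‖Complex.exp (-ζ) - 1 - -ζ‖ := by
        rw [← norm_neg]; ring_nf
    _ ≤ ‖ζ‖ ^ 2 := hexp

lemma Complex.norm_log_le_of_norm_sub_one_le {u : ℂ} (hu : ‖u - 1‖ ≤ 1 / 2) :
    ‖log u‖ ≤ 3 / 2 * ‖u - 1‖ := by
  simpa using norm_log_one_add_half_le_self hu

lemma Complex.abs_arg_le_of_norm_sub_one_le {u : ℂ} (hu : ‖u - 1‖ ≤ 1 / 2) :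
    |u.arg| ≤ 3 / 2 * ‖u - 1‖ := by
  rw [← log_im]
  exact (abs_im_le_norm _).trans (norm_log_le_of_norm_sub_one_le hu)

lemma Complex.norm_cpow_ofReal_sub_one_le {u : ℂ} (hu : ‖u - 1‖ ≤ 1 / 2) {α : ℝ}
    (hα : α ∈ Icc (0 : ℝ) 1) : ‖u ^ (α : ℂ) - 1‖ ≤ 3 * ‖u - 1‖ := by
  have hu0 : u ≠ 0 := by rintro rfl; norm_num at hu
  have hlog : ‖log u * α‖ ≤ 3 / 2 * ‖u - 1‖ := by
    rw [norm_mul, norm_real, Real.norm_of_nonneg hα.1]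
    exact mul_le_of_le_one_right (norm_nonneg _) hα.2 |>.trans
      (norm_log_le_of_norm_sub_one_le hu)
  rw [cpow_def_of_ne_zero hu0]
  linarith [norm_exp_sub_one_le (x := log u * α) (by linarith)]

lemma Complex.mul_cpow_of_arg_add_mem {z u : ℂ} (hz : z ≠ 0) (hu : u ≠ 0)
    (h : z.arg + u.arg ∈ Ioc (-π) π) (s : ℂ) : (z * u) ^ s = z ^ s * u ^ s := by
  rw [cpow_def_of_ne_zero (mul_ne_zero hz hu), cpow_def_of_ne_zero hz, cpow_def_of_ne_zero hu,
    (log_mul_eq_add_log_iff hz hu).2 h, add_mul, Complex.exp_add]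

/-- For `u = χ / z`, the bound `1 / 2` on `|z| τ` controls `log u`, and `(π - θ) / 2` keeps
`arg z + arg u` inside `(-π, π]`. -/
lemma norm_chi_cpow_sub_cpow_le_of_small {θ : ℝ} (hθ : θ < π) {τ : ℝ} (hτ : 0 < τ) {z : ℂ}
    (hz : z ≠ 0) (harg : |z.arg| ≤ θ) (hsmall : ‖z‖ * τ ≤ min (1 / 2) ((π - θ) / 2)) {α : ℝ}
    (hα : α ∈ Icc (0 : ℝ) 1) :
    ‖chi τ z ^ (α : ℂ) - z ^ (α : ℂ)‖ ≤ 3 * (‖z‖ * τ) * ‖z‖ ^ α := by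
  set ζ : ℂ := z * τ
  have hζ : ζ ≠ 0 := mul_ne_zero hz (ofReal_ne_zero.2 hτ.ne')
  have hζnorm : ‖ζ‖ = ‖z‖ * τ := by simp [ζ, hτ.le]
  set u : ℂ := (1 - Complex.exp (-ζ)) / ζ
  have hu : ‖u - 1‖ ≤ ‖z‖ * τ := hζnorm ▸
    norm_one_sub_exp_neg_div_sub_one_le hζ (by linarith [min_le_left (1 / 2 : ℝ) ((π - θ) / 2)])
  have hu_half : ‖u - 1‖ ≤ 1 / 2 := hu.trans (hsmall.trans (min_le_left _ _))
  have hu0 : u ≠ 0 := by rintro hu0; norm_num [hu0] at hu_half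
  have hchi : chi τ z = z * u := by
    simp only [chi, u, ζ, neg_mul]
    field_simp
  have hargs : z.arg + u.arg ∈ Ioc (-π) π := by
    have := hsmall.trans (min_le_right _ _)
    constructor <;> linarith [abs_le.1 harg, abs_le.1 (abs_arg_le_of_norm_sub_one_le hu_half)]
  rw [hchi, mul_cpow_of_arg_add_mem hz hu0 hargs, ← mul_sub_one, norm_mul, norm_cpow_real,
    mul_comm]
  gcongr
  exact (norm_cpow_ofReal_sub_one_le hu_half hα).trans (by gcongr)

lemma Complex.norm_cpow_sub_cpow_le_of_norm_le {x z : ℂ} {K : ℝ} (hK : 1 ≤ K)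
    (hxz : ‖x‖ ≤ K * ‖z‖) {α : ℝ} (hα : α ∈ Icc (0 : ℝ) 1) :
    ‖x ^ (α : ℂ) - z ^ (α : ℂ)‖ ≤ (K + 1) * ‖z‖ ^ α := by
  have hx : ‖x‖ ^ α ≤ K * ‖z‖ ^ α :=
    calc ‖x‖ ^ α ≤ (K * ‖z‖) ^ α := by gcongr; exact hα.1
      _ = K ^ α * ‖z‖ ^ α := mul_rpow (by linarith) (norm_nonneg _)
      _ ≤ K * ‖z‖ ^ α := by gcongr; exact rpow_le_self_of_one_le hK hα.2
  calc ‖x ^ (α : ℂ) - z ^ (α : ℂ)‖ ≤ ‖x‖ ^ α + ‖z‖ ^ α := by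
        simpa only [norm_cpow_real] using norm_sub_le (x ^ (α : ℂ)) (z ^ (α : ℂ))
    _ ≤ (K + 1) * ‖z‖ ^ α := by linarith

lemma norm_chi_le {τ : ℝ} (hτ : 0 < τ) {z : ℂ} {M : ℝ} (hM : ‖z‖ * τ ≤ M) :
    ‖chi τ z‖ ≤ (1 + Real.exp M) / τ := by
  have hexp : ‖Complex.exp (-z * τ)‖ ≤ Real.exp M := by
    rw [norm_exp]
    gcongr
    calc (-z * τ).re ≤ ‖-z * τ‖ := re_le_norm _
      _ = ‖z‖ * τ := by simp [hτ.le]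
      _ ≤ M := hM
  rw [chi, norm_div, norm_real, Real.norm_of_nonneg hτ.le]
  gcongr
  exact (norm_sub_le _ _).trans (by rw [norm_one]; linarith)

lemma exists_norm_chi_cpow_sub_cpow_le {θ : ℝ} (hθ : θ < π) (M : ℝ) :
    ∃ C > 0, ∀ τ : ℝ, 0 < τ → ∀ z : ℂ, z ≠ 0 → |z.arg| ≤ θ → ‖z‖ * τ ≤ M →
      ∀ α ∈ Icc (0 : ℝ) 1, ‖chi τ z ^ (α : ℂ) - z ^ (α : ℂ)‖ ≤ C * (‖z‖ * τ) * ‖z‖ ^ α := by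
  set δ : ℝ := min (1 / 2) ((π - θ) / 2)
  have hδ : 0 < δ := lt_min (by norm_num) (by linarith)
  set K : ℝ := (1 + Real.exp M) / δ
  have hK : 1 ≤ K := by
    rw [le_div_iff₀ hδ, one_mul]
    linarith [min_le_left (1 / 2 : ℝ) ((π - θ) / 2), Real.exp_pos M]
  refine ⟨max 3 ((K + 1) / δ), by positivity, fun τ hτ z hz harg hM α hα => ?_⟩
  rcases le_or_gt (‖z‖ * τ) δ with hsmall | hlarge
  · calc ‖chi τ z ^ (α : ℂ) - z ^ (α : ℂ)‖ ≤ 3 * (‖z‖ * τ) * ‖z‖ ^ α :=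
          norm_chi_cpow_sub_cpow_le_of_small hθ hτ hz harg hsmall hα
      _ ≤ max 3 ((K + 1) / δ) * (‖z‖ * τ) * ‖z‖ ^ α := by gcongr; exact le_max_left _ _
  · have hchi : ‖chi τ z‖ ≤ K * ‖z‖ :=
      calc ‖chi τ z‖ ≤ (1 + Real.exp M) / τ := norm_chi_le hτ hM
        _ = K * (δ / τ) := by simp only [K]; field_simp
        _ ≤ K * ‖z‖ := by gcongr; rw [div_le_iff₀ hτ]; exact hlarge.le
    calc ‖chi τ z ^ (α : ℂ) - z ^ (α : ℂ)‖ ≤ (K + 1) * ‖z‖ ^ α :=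
          norm_cpow_sub_cpow_le_of_norm_le hK hchi hα
      _ ≤ (K + 1) * ‖z‖ ^ α * (‖z‖ * τ / δ) :=
          le_mul_of_one_le_right (by positivity) ((one_le_div hδ).2 hlarge.le)
      _ = (K + 1) / δ * (‖z‖ * τ) * ‖z‖ ^ α := by ring
      _ ≤ max 3 ((K + 1) / δ) * (‖z‖ * τ) * ‖z‖ ^ α := by gcongr; exact le_max_right _ _

lemma mul_w_eq_integral (μ : ℝ → ℝ) {x : ℂ} (hx : x ≠ 0) :
    x * w μ x = ∫ α in (0 : ℝ)..1, x ^ (α : ℂ) * μ α := by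
  rw [w, ← intervalIntegral.integral_const_mul]
  refine intervalIntegral.integral_congr fun α _ => ?_
  rw [← mul_assoc, cpow_sub _ _ hx, cpow_one, mul_div_cancel₀ _ hx]

lemma intervalIntegrable_cpow_mul {μ : ℝ → ℝ} (hc : ContinuousOn μ (Icc 0 1)) {x : ℂ}
    (hx : x ≠ 0) : IntervalIntegrable (fun α : ℝ => x ^ (α : ℂ) * μ α) volume 0 1 := by
  refine ContinuousOn.intervalIntegrable ?_
  rw [uIcc_of_le zero_le_one]
  exact (continuous_ofReal.const_cpow (Or.inl hx)).continuousOn.mul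
    (continuous_ofReal.comp_continuousOn hc)

lemma norm_mul_w_sub_mul_w_le {μ : ℝ → ℝ} (hc : ContinuousOn μ (Icc 0 1))
    (hnn : ∀ α ∈ Icc (0 : ℝ) 1, 0 ≤ μ α) {x z : ℂ} (hx : x ≠ 0) (hz : z ≠ 0) {ε : ℝ}
    (h : ∀ α ∈ Icc (0 : ℝ) 1, ‖x ^ (α : ℂ) - z ^ (α : ℂ)‖ ≤ ε * ‖z‖ ^ α) :
    ‖x * w μ x - z * w μ z‖ ≤ ε * ‖z‖ * ∫ α in (0 : ℝ)..1, ‖z‖ ^ (α - 1) * μ α := by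
  have hz' : 0 < ‖z‖ := norm_pos_iff.2 hz
  rw [mul_w_eq_integral μ hx, mul_w_eq_integral μ hz, ← intervalIntegral.integral_sub
    (intervalIntegrable_cpow_mul hc hx) (intervalIntegrable_cpow_mul hc hz),
    ← intervalIntegral.integral_const_mul]
  refine intervalIntegral.norm_integral_le_of_norm_le zero_le_one
    (Filter.Eventually.of_forall fun α hα => ?_) ?_
  · have hα' := Ioc_subset_Icc_self hα
    rw [← sub_mul, norm_mul, norm_real, Real.norm_of_nonneg (hnn α hα'), ← mul_assoc,
      mul_assoc ε, ← rpow_one_add' hz'.le (by linarith [hα.1]), add_sub_cancel]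
    exact mul_le_mul_of_nonneg_right (h α hα') (hnn α hα')
  · refine ContinuousOn.intervalIntegrable ?_
    rw [uIcc_of_le zero_le_one]
    exact continuousOn_const.mul ((continuous_const.rpow (continuous_id.sub continuous_const)
      fun _ => Or.inl hz'.ne').continuousOn.mul hc)

theorem stmt_14_general (μ : ℝ → ℝ) (hc : ContinuousOn μ (Set.Icc 0 1))
    (hnn : ∀ α ∈ Set.Icc (0:ℝ) 1, 0 ≤ μ α)
    (θ : ℝ) (hθ : θ ∈ Set.Ioo (π / 2) π) :
    ∃ c > 0, ∀ τ : ℝ, 0 < τ → ∀ z : ℂ, z ≠ 0 → |z.arg| ≤ θ →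
      (‖z‖ * τ ≤ 1 ∨ (|z.arg| = θ ∧ ‖z‖ * τ * Real.sin θ ≤ π)) →
      ‖(1 - Complex.exp (-z * (τ : ℂ))) / (τ : ℂ) *
            w μ ((1 - Complex.exp (-z * (τ : ℂ))) / (τ : ℂ)) - z * w μ z‖ ≤
        c * τ * ‖z‖ ^ 2 *
          ∫ α in (0:ℝ)..1, ‖z‖ ^ (α - 1) * μ α := by
  have hsin : 0 < Real.sin θ := sin_pos_of_pos_of_lt_pi (by linarith [hθ.1, pi_pos]) hθ.2
  obtain ⟨C, hC, hkey⟩ := exists_norm_chi_cpow_sub_cpow_le hθ.2 (max 1 (π / Real.sin θ))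
  refine ⟨C, hC, fun τ hτ z hz harg hΓ => ?_⟩
  have hM : ‖z‖ * τ ≤ max 1 (π / Real.sin θ) := by
    rcases hΓ with hnear | ⟨-, hray⟩
    · exact hnear.trans (le_max_left _ _)
    · exact ((le_div_iff₀ hsin).2 hray).trans (le_max_right _ _)
  have hχ : chi τ z ≠ 0 := by
    refine chi_ne_zero hτ hz ?_
    rcases hΓ with hnear | ⟨hθarg, -⟩
    · exact Or.inl (by linarith [pi_gt_three])
    · exact Or.inr (hθarg ▸ hθ.1.ne')
  calc ‖chi τ z * w μ (chi τ z) - z * w μ z‖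
      ≤ C * (‖z‖ * τ) * ‖z‖ * ∫ α in (0 : ℝ)..1, ‖z‖ ^ (α - 1) * μ α :=
        norm_mul_w_sub_mul_w_le hc hnn hχ hz (hkey τ hτ z hz harg hM)
    _ = C * τ * ‖z‖ ^ 2 * ∫ α in (0 : ℝ)..1, ‖z‖ ^ (α - 1) * μ α := by ring

theorem stmt_14 (μ : ℝ → ℝ) (hc : ContinuousOn μ (Set.Icc 0 1))
    (hnn : ∀ α ∈ Set.Icc (0:ℝ) 1, 0 ≤ μ α) (h0 : 0 < μ 0) (h1 : 0 < μ 1)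
    (θ : ℝ) (hθ : θ ∈ Set.Ioo (π / 2) π) :
    ∃ c > 0, ∀ τ : ℝ, 0 < τ → ∀ z : ℂ, z ≠ 0 → |z.arg| ≤ θ →
      (‖z‖ * τ ≤ 1 ∨ (|z.arg| = θ ∧ ‖z‖ * τ * Real.sin θ ≤ π)) →
      ‖(1 - Complex.exp (-z * (τ : ℂ))) / (τ : ℂ) *
            w μ ((1 - Complex.exp (-z * (τ : ℂ))) / (τ : ℂ)) - z * w μ z‖ ≤
        c * τ * ‖z‖ ^ 2 *
          ∫ α in (0:ℝ)..1, ‖z‖ ^ (α - 1) * μ α :=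
  stmt_14_general μ hc hnn θ hθ
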